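/- arXiv:2109.14307 — 2 statements merged into one kernel-verified Lean document; each statement's English description precedes it below -/
import Mathlib

section
/- Let F(x) ∈ ℂ[x][[t]] and ρ ∈ ℂ. Then the non-negative part in x of F(1/x)/(1-ρx)^2 equals F(ρ)/(1-ρx)^2 + ρF'(ρ)/(1-ρx), where F' denotes the derivative of F with respect to x (applied coefficientwise in t). -/
namespace Polynomial

variable {R : Type*} [CommSemiring R]

theorem mul_eval_derivative (p : R[X]) (x : R) :
    x * p.derivative.eval x = p.sum fun j a => a * j * x ^ j := by
  rw [derivative_eval, sum_def, sum_def, Finset.mul_sum]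
  refine Finset.sum_congr rfl fun j _ => ?_
  cases j with
  | zero => simp
  | succ j => simp only [Nat.add_sub_cancel, pow_succ]; ring

/-- Coefficient of `x ^ k` in `[x^{≥0}] p(1/x) / (1 - ρx)^2`, in terms of `p(ρ)` and `p'(ρ)`. -/
theorem sum_mul_add_succ_mul_pow_add (p : R[X]) (ρ : R) (k : ℕ) :
    (p.sum fun j a => a * ((k : R) + j + 1) * ρ ^ (k + j))
      = p.eval ρ * ((k : R) + 1) * ρ ^ k + ρ * p.derivative.eval ρ * ρ ^ k := by
  rw [mul_eval_derivative, eval_eq_sum, sum_def, sum_def, sum_def, Finset.sum_mul,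
    Finset.sum_mul, Finset.sum_mul, ← Finset.sum_add_distrib]
  refine Finset.sum_congr rfl fun j _ => ?_
  rw [pow_add]
  ring

end Polynomial

/-- Pole extraction lemma, double pole: for `F ∈ ℂ[x][[t]]` and `ρ ∈ ℂ`,
`[x^{≥0}] (F(1/x)/(1-ρx)^2) = F(ρ)/(1-ρx)^2 + ρ F'(ρ)/(1-ρx)`, stated
coefficientwise: for each `t`-coefficient `f = coeff n F` and each
`x`-exponent `k ≥ 0`, the coefficient of `x^k` in
`f(1/x)·∑_m (m+1) ρ^m x^m`, namely `∑_j f_j (k+j+1) ρ^{k+j}`, equals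
`f(ρ)(k+1)ρ^k + ρ f'(ρ) ρ^k`. -/
theorem stmt_1 (F : PowerSeries (Polynomial ℂ)) (ρ : ℂ) (n : ℕ) (k : ℕ) :
    ((PowerSeries.coeff (R := Polynomial ℂ) n F).sum
        fun j a => a * ((k : ℂ) + (j : ℂ) + 1) * ρ ^ (k + j))
      = (PowerSeries.coeff (R := Polynomial ℂ) n F).eval ρ * ((k : ℂ) + 1) * ρ ^ k
        + ρ * (Polynomial.derivative (PowerSeries.coeff (R := Polynomial ℂ) n F)).eval ρ * ρ ^ k :=
  (PowerSeries.coeff n F).sum_mul_add_succ_mul_pow_add ρ k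
end

section
/- Let u ∈ ℚ[[t]] be the unique power series with u(0)=0 satisfying (1-3u)^3(1+u)t^2 + (1+18u^2-27u^4)t - u = 0. Then there exists a unique power series v ∈ ℚ[[t]] with v(0)=0 satisfying (1 + 3v - v^3)u - v(v^2+v+1) = 0, and v = t + 3t^2 + O(t^3). -/
/-!
The cubic `-(1 + u) v³ - v² + (3u - 1) v + u` in `v` has unit leading coefficient, and at `v = 0`
its value `u` lies in `(X)` while its slope `3u - 1` is a unit. As `R⟦X⟧` is `X`-adically
complete, hence Henselian at `(X)`, the cubic has a root `v ∈ (X)`. The difference of its values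
at `v` and `w` is `v - w` times a unit, which gives uniqueness and, compared with the approximate
root `X + 3X²` (the equation of `u` forces `u ≡ X + X² mod X³`), gives `v ≡ X + 3X² mod X³`.
-/

open PowerSeries

theorem HenselianRing.exists_isRoot_of_isUnit_leadingCoeff {R : Type*} [CommRing R]
    {I : Ideal R} [HenselianRing R I] {f : Polynomial R} (hf : IsUnit f.leadingCoeff) {a₀ : R}
    (h₁ : f.eval a₀ ∈ I) (h₂ : IsUnit (Ideal.Quotient.mk I (f.derivative.eval a₀))) :
    ∃ a, f.IsRoot a ∧ a - a₀ ∈ I := by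
  obtain ⟨c, hc⟩ := hf.exists_left_inv
  have hcu : IsUnit c := .of_mul_eq_one _ hc
  obtain ⟨a, ha, haI⟩ := HenselianRing.is_henselian (Polynomial.C c * f)
    (Polynomial.monic_C_mul_of_mul_leadingCoeff_eq_one hc) a₀
    (by simpa using I.mul_mem_left c h₁)
    (by simpa using (hcu.map (Ideal.Quotient.mk I)).mul h₂)
  refine ⟨a, ?_, haI⟩
  simpa [Polynomial.IsRoot, hcu.mul_right_eq_zero] using ha

section

variable {R : Type*} [CommRing R]

theorem cubic_sub_cubic (u v w : R) :
    ((1 + 3 * v - v ^ 3) * u - v * (v ^ 2 + v + 1))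
        - ((1 + 3 * w - w ^ 3) * u - w * (w ^ 2 + w + 1))
      = (v - w) * (3 * u - 1 - (v + w) - (1 + u) * (v ^ 2 + v * w + w ^ 2)) := by
  ring

theorem isUnit_cubic_slope {u v w : R⟦X⟧} (hu : constantCoeff u = 0)
    (hv : constantCoeff v = 0) (hw : constantCoeff w = 0) :
    IsUnit (3 * u - 1 - (v + w) - (1 + u) * (v ^ 2 + v * w + w ^ 2)) := by
  rw [isUnit_iff_constantCoeff]
  simp [hu, hv, hw]

theorem X_pow_dvd_sub_of_X_pow_dvd_cubic_sub {u v w : R⟦X⟧} (hu : constantCoeff u = 0)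
    (hv : constantCoeff v = 0) (hw : constantCoeff w = 0) {n : ℕ}
    (h : X ^ n ∣ ((1 + 3 * v - v ^ 3) * u - v * (v ^ 2 + v + 1))
      - ((1 + 3 * w - w ^ 3) * u - w * (w ^ 2 + w + 1))) :
    X ^ n ∣ v - w := by
  rw [cubic_sub_cubic] at h
  exact (isUnit_cubic_slope hu hv hw).dvd_mul_right.mp h

theorem eq_of_cubic_eq {u v w : R⟦X⟧} (hu : constantCoeff u = 0)
    (hv : constantCoeff v = 0) (hw : constantCoeff w = 0)
    (h : (1 + 3 * v - v ^ 3) * u - v * (v ^ 2 + v + 1)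
      = (1 + 3 * w - w ^ 3) * u - w * (w ^ 2 + w + 1)) :
    v = w := by
  rw [← sub_eq_zero, cubic_sub_cubic] at h
  exact sub_eq_zero.mp ((isUnit_cubic_slope hu hv hw).mul_left_eq_zero.mp h)

noncomputable def cubicPoly (u : R) : Polynomial R :=
  .C (-(1 + u)) * .X ^ 3 + .C (-1) * .X ^ 2 + .C (3 * u - 1) * .X + .C u

theorem eval_cubicPoly (u v : R) :
    (cubicPoly u).eval v = (1 + 3 * v - v ^ 3) * u - v * (v ^ 2 + v + 1) := by
  simp only [cubicPoly, Polynomial.eval_add, Polynomial.eval_mul, Polynomial.eval_C,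
    Polynomial.eval_pow, Polynomial.eval_X]
  ring

theorem exists_cubic_eq_zero [Nontrivial R] {u : R⟦X⟧} (hu : constantCoeff u = 0) :
    ∃ v : R⟦X⟧, constantCoeff v = 0 ∧ (1 + 3 * v - v ^ 3) * u - v * (v ^ 2 + v + 1) = 0 := by
  have hlead : IsUnit (cubicPoly u).leadingCoeff := by
    have hunit : IsUnit (-(1 + u)) := by simp [isUnit_iff_constantCoeff, hu]
    rwa [cubicPoly, Polynomial.leadingCoeff_cubic hunit.ne_zero]
  have hslope : IsUnit ((cubicPoly u).derivative.eval 0) := by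
    simp [cubicPoly, isUnit_iff_constantCoeff, hu]
  obtain ⟨v, hv, hvX⟩ := HenselianRing.exists_isRoot_of_isUnit_leadingCoeff
    (I := Ideal.span {X}) hlead
    (by simpa [Ideal.mem_span_singleton, eval_cubicPoly] using X_dvd_iff.mpr hu)
    (hslope.map _)
  refine ⟨v, ?_, ?_⟩
  · simpa [Ideal.mem_span_singleton, X_dvd_iff] using hvX
  · rwa [Polynomial.IsRoot, eval_cubicPoly] at hv

theorem X_pow_three_dvd_sub_X_add_X_sq {u : R⟦X⟧} (hu0 : constantCoeff u = 0)
    (hu : (1 - 3 * u) ^ 3 * (1 + u) * X ^ 2 + (1 + 18 * u ^ 2 - 27 * u ^ 4) * X - u = 0) :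
    X ^ 3 ∣ u - (X + X ^ 2) := by
  obtain ⟨a, rfl⟩ := X_dvd_iff.mpr hu0
  exact ⟨-8 * a + 18 * a ^ 2 + 18 * X * a ^ 2 - 27 * X ^ 2 * a ^ 4 - 27 * X ^ 3 * a ^ 4,
    by linear_combination -hu⟩

theorem X_pow_three_dvd_cubic_X_add_three_X_sq {u : R⟦X⟧} (hu : X ^ 3 ∣ u - (X + X ^ 2)) :
    X ^ 3 ∣ (1 + 3 * (X + 3 * X ^ 2) - (X + 3 * X ^ 2) ^ 3) * u
      - (X + 3 * X ^ 2) * ((X + 3 * X ^ 2) ^ 2 + (X + 3 * X ^ 2) + 1) := by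
  obtain ⟨p, hp⟩ := hu
  refine ⟨5 - 10 * X - 37 * X ^ 2 - 63 * X ^ 3 - 54 * X ^ 4 - 27 * X ^ 5
    + p * (1 + 3 * (X + 3 * X ^ 2) - (X + 3 * X ^ 2) ^ 3), ?_⟩
  linear_combination (1 + 3 * (X + 3 * X ^ 2) - (X + 3 * X ^ 2) ^ 3) * hp

end

/-- Let `u ∈ ℚ[[t]]` be the unique power series with `u(0)=0` satisfying
`(1-3u)³(1+u)t² + (1+18u²-27u⁴)t - u = 0`.  Then there is a unique power
series `v ∈ ℚ[[t]]` with `v(0)=0` satisfying `(1+3v-v³)u - v(v²+v+1) = 0`,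
and `v = t + 3t² + ⋯`. -/
theorem stmt_7 (u : PowerSeries ℚ)
    (hu0 : constantCoeff (R := ℚ) u = 0)
    (hu : (1 - 3 * u) ^ 3 * (1 + u) * X ^ 2 + (1 + 18 * u ^ 2 - 27 * u ^ 4) * X - u = 0) :
    (∃! v : PowerSeries ℚ, constantCoeff (R := ℚ) v = 0 ∧
      (1 + 3 * v - v ^ 3) * u - v * (v ^ 2 + v + 1) = 0) ∧
    (∀ v : PowerSeries ℚ, constantCoeff (R := ℚ) v = 0 →
      (1 + 3 * v - v ^ 3) * u - v * (v ^ 2 + v + 1) = 0 →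
      coeff (R := ℚ) 1 v = 1 ∧ coeff (R := ℚ) 2 v = 3) := by
  obtain ⟨v, hv0, hv⟩ := exists_cubic_eq_zero hu0
  refine ⟨⟨v, ⟨hv0, hv⟩, fun w ⟨hw0, hw⟩ => eq_of_cubic_eq hu0 hw0 hv0 (hw.trans hv.symm)⟩, ?_⟩
  intro w hw0 hw
  have hdvd : X ^ 3 ∣ w - (X + 3 * X ^ 2) :=
    X_pow_dvd_sub_of_X_pow_dvd_cubic_sub hu0 hw0 (by simp) <| by
      rw [hw, zero_sub, dvd_neg]
      exact X_pow_three_dvd_cubic_X_add_three_X_sq (X_pow_three_dvd_sub_X_add_X_sq hu0 hu)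
  rw [X_pow_dvd_iff] at hdvd
  have h1 := hdvd 1 (by norm_num)
  have h2 := hdvd 2 (by norm_num)
  simp only [← map_ofNat C 3, map_sub, map_add, coeff_C_mul, coeff_X_pow, coeff_X] at h1 h2
  norm_num [sub_eq_zero] at h1 h2
  exact ⟨h1, h2⟩
end
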